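/- Let 𝒱 be a v-transform with fulcrum δ ∈ (0,1), generator Ψ differentiable with strictly positive derivative, conditional down probability Δ and stochastic inversion function 𝒱⁻¹_s. Let V and W be independent random variables, each uniformly distributed on [0,1], and set U = 𝒱⁻¹_s(V, W). Then 𝒱(U) = V almost surely and U is uniformly distributed on [0,1]. -/

import Mathlib

/-!
STATEMENT 9: stochastic inversion of a v-transform: if `V, W` are independent
uniform variables on `[0,1]` and `U = 𝒱⁻¹ₛ(V, W)`, then `𝒱(U) = V` a.s. and `U`
is uniform on `[0,1]`.
-/

open Set MeasureTheory

/-- The v-transform with fulcrum `δ` and generator `Ψ` (with inverse `Ψinv`):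
`𝒱(u) = (1-u) - (1-δ)·Ψ(u/δ)` for `u ≤ δ` and `𝒱(u) = u - δ·Ψinv((1-u)/(1-δ))`
for `u > δ`. -/
noncomputable def vt (δ : ℝ) (Ψ Ψinv : ℝ → ℝ) (u : ℝ) : ℝ :=
  if u ≤ δ then (1 - u) - (1 - δ) * Ψ (u / δ)
  else u - δ * Ψinv ((1 - u) / (1 - δ))

/-- Left-branch inverse `𝒱⁻¹(v) = inf {u ∈ [0,1] : 𝒱 u = v}`. -/
noncomputable def vtInv (V : ℝ → ℝ) (v : ℝ) : ℝ :=
  sInf {u | u ∈ Set.Icc (0:ℝ) 1 ∧ V u = v}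

/-- Conditional down probability `Δ(v) = -1 / 𝒱′(𝒱⁻¹(v))`. -/
noncomputable def vtDelta (V : ℝ → ℝ) (v : ℝ) : ℝ :=
  -1 / deriv V (vtInv V v)

/-- Stochastic inversion function of a v-transform:
`𝒱⁻¹ₛ(v,w) = 𝒱⁻¹(v)` if `w ≤ Δ(v)`, and `v + 𝒱⁻¹(v)` otherwise. -/
noncomputable def vtSInv (V : ℝ → ℝ) (v w : ℝ) : ℝ :=
  if w ≤ vtDelta V v then vtInv V v else v + vtInv V v

/-
Write `g = 𝒱⁻¹` and `H v = v + g v` for the two roots of `𝒱 u = v`. Both are continuous on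
`[0,1]`, with `g' = -Δ` and `H' = 1 - Δ` on `(0,1)`, where `0 < Δ < 1`; hence `g` maps `(0,1)`
decreasingly onto `(0,δ)` and `H` maps it increasingly onto `(δ,1)`. Given `V = v`, `U` equals
`g v` with probability `Δ v` and `H v` otherwise, so for a Borel set `A` the one-dimensional
change of variables gives
`P(U ∈ A) = ∫₀¹ |g'| 1_A(g) + ∫₀¹ |H'| 1_A(H) = λ(A ∩ (0,δ)) + λ(A ∩ (δ,1)) = λ(A ∩ [0,1])`.
-/

lemma IsCompact.continuousOn_image_of_leftInvOn {X Y : Type*} [TopologicalSpace X]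
    [TopologicalSpace Y] [T2Space Y] {s : Set X} {f : X → Y} {f' : Y → X} (hs : IsCompact s)
    (hf : ContinuousOn f s) (hinv : LeftInvOn f' f s) : ContinuousOn f' (f '' s) := by
  refine continuousOn_iff_isClosed.2 fun C hC => ⟨f '' (s ∩ C), ?_, ?_⟩
  · exact ((hs.inter_right hC).image_of_continuousOn (hf.mono inter_subset_left)).isClosed
  · ext y
    constructor
    · rintro ⟨hy, x, hx, rfl⟩
      exact ⟨⟨x, ⟨hx, by rwa [mem_preimage, hinv hx] at hy⟩, rfl⟩, x, hx, rfl⟩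
    · rintro ⟨⟨x, ⟨hx, hxC⟩, rfl⟩, -⟩
      exact ⟨by rwa [mem_preimage, hinv hx], x, hx, rfl⟩

lemma uniform_setOf_ite_mem {p : ℝ} (hp : p ∈ Icc (0 : ℝ) 1) (a b : ℝ) (A : Set ℝ) :
    volume.restrict (Icc (0 : ℝ) 1) {w | (if w ≤ p then a else b) ∈ A}
      = ENNReal.ofReal p * A.indicator 1 a + ENNReal.ofReal (1 - p) * A.indicator 1 b := by
  have hIic : volume.restrict (Icc (0 : ℝ) 1) (Iic p) = ENNReal.ofReal p := by
    rw [Measure.restrict_apply measurableSet_Iic,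
      show Iic p ∩ Icc 0 1 = Icc 0 p by ext; grind, Real.volume_Icc, sub_zero]
  have hIoi : volume.restrict (Icc (0 : ℝ) 1) (Ioi p) = ENNReal.ofReal (1 - p) := by
    rw [Measure.restrict_apply measurableSet_Ioi,
      show Ioi p ∩ Icc 0 1 = Ioc p 1 by ext; grind, Real.volume_Ioc]
  have huniv :
      volume.restrict (Icc (0 : ℝ) 1) univ = ENNReal.ofReal p + ENNReal.ofReal (1 - p) := by
    rw [← ENNReal.ofReal_add hp.1 (by linarith [hp.2]), Measure.restrict_apply_univ,
      Real.volume_Icc]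
    ring_nf
  by_cases ha : a ∈ A <;> by_cases hb : b ∈ A
  · simpa [ha, hb, apply_ite (· ∈ A)] using huniv
  · convert hIic using 2
    · ext; simp [ha, hb, apply_ite (· ∈ A)]
    · simp [ha, hb]
  · convert hIoi using 2
    · ext; simp [ha, hb, apply_ite (· ∈ A)]
    · simp [ha, hb]
  · simp [ha, hb, apply_ite (· ∈ A)]

lemma restrict_Ioo_add_restrict_Ioo {μ : Measure ℝ} [NullSingletonClass μ] {a b c : ℝ}
    (hab : a ≤ b) (hbc : b < c) :
    μ.restrict (Ioo a b) + μ.restrict (Ioo b c) = μ.restrict (Icc a c) := by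
  rw [Measure.restrict_congr_set Ioo_ae_eq_Ioc, ← Measure.restrict_union ?_ measurableSet_Ioo,
    Ioc_union_Ioo_eq_Ioo hab hbc, Measure.restrict_congr_set Ioo_ae_eq_Icc]
  exact disjoint_left.2 fun x hx hx' => hx'.1.not_ge hx.2

structure IsVTransform (δ : ℝ) (Ψ Ψinv : ℝ → ℝ) : Prop where
  fulcrum_pos : 0 < δ
  fulcrum_lt_one : δ < 1
  continuousOn_gen : ContinuousOn Ψ (Icc 0 1)
  gen_zero : Ψ 0 = 0
  gen_one : Ψ 1 = 1
  genInv_gen : ∀ x ∈ Icc (0 : ℝ) 1, Ψinv (Ψ x) = x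
  differentiableAt_gen : ∀ x ∈ Ioo (0 : ℝ) 1, DifferentiableAt ℝ Ψ x
  deriv_gen_pos : ∀ x ∈ Ioo (0 : ℝ) 1, 0 < deriv Ψ x

lemma vt_of_le {δ u : ℝ} {Ψ Ψinv : ℝ → ℝ} (hu : u ≤ δ) :
    vt δ Ψ Ψinv u = 1 - u - (1 - δ) * Ψ (u / δ) :=
  if_pos hu

lemma vt_of_lt {δ u : ℝ} {Ψ Ψinv : ℝ → ℝ} (hu : δ < u) :
    vt δ Ψ Ψinv u = u - δ * Ψinv ((1 - u) / (1 - δ)) :=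
  if_neg hu.not_ge

noncomputable def vtInvRight (V : ℝ → ℝ) (v : ℝ) : ℝ :=
  v + vtInv V v

namespace IsVTransform

variable {δ : ℝ} {Ψ Ψinv : ℝ → ℝ}

lemma vt_zero (h : IsVTransform δ Ψ Ψinv) : vt δ Ψ Ψinv 0 = 1 := by
  simp [vt_of_le h.fulcrum_pos.le, h.gen_zero]

lemma vt_fulcrum (h : IsVTransform δ Ψ Ψinv) : vt δ Ψ Ψinv δ = 0 := by
  rw [vt_of_le le_rfl, div_self h.fulcrum_pos.ne', h.gen_one]
  ring

lemma genInv_mem_Icc (h : IsVTransform δ Ψ Ψinv) {x : ℝ} (hx : x ∈ Icc (0 : ℝ) 1) :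
    Ψinv x ∈ Icc (0 : ℝ) 1 := by
  have hsurj := intermediate_value_Icc zero_le_one h.continuousOn_gen
  rw [h.gen_zero, h.gen_one] at hsurj
  obtain ⟨y, hy, rfl⟩ := hsurj hx
  rwa [h.genInv_gen y hy]

lemma div_fulcrum_mem_Icc (h : IsVTransform δ Ψ Ψinv) {u : ℝ} (hu : u ∈ Icc 0 δ) :
    u / δ ∈ Icc (0 : ℝ) 1 :=
  ⟨div_nonneg hu.1 h.fulcrum_pos.le, (div_le_one h.fulcrum_pos).2 hu.2⟩

lemma div_fulcrum_mem_Ioo (h : IsVTransform δ Ψ Ψinv) {u : ℝ} (hu : u ∈ Ioo 0 δ) :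
    u / δ ∈ Ioo (0 : ℝ) 1 :=
  ⟨div_pos hu.1 h.fulcrum_pos, (div_lt_one h.fulcrum_pos).2 hu.2⟩

lemma hasDerivAt_vt (h : IsVTransform δ Ψ Ψinv) {u : ℝ} (hu : u ∈ Ioo 0 δ) :
    HasDerivAt (vt δ Ψ Ψinv) (-1 - (1 - δ) * (deriv Ψ (u / δ) / δ)) u := by
  have hΨ : HasDerivAt Ψ (deriv Ψ (u / δ)) (u / δ) :=
    (h.differentiableAt_gen _ (h.div_fulcrum_mem_Ioo hu)).hasDerivAt
  have hleft : HasDerivAt (fun u => 1 - u - (1 - δ) * Ψ (u / δ))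
      (-1 - (1 - δ) * (deriv Ψ (u / δ) / δ)) u := by
    refine (((hasDerivAt_id' u).const_sub 1).sub
      ((hΨ.comp u ((hasDerivAt_id' u).div_const δ)).const_mul (1 - δ))).congr_deriv ?_
    ring
  refine hleft.congr_of_eventuallyEq ?_
  filter_upwards [Iio_mem_nhds hu.2] with x hx
  exact vt_of_le hx.le

lemma deriv_vt_lt (h : IsVTransform δ Ψ Ψinv) {u : ℝ} (hu : u ∈ Ioo 0 δ) :
    deriv (vt δ Ψ Ψinv) u < -1 := by
  have hd := h.deriv_gen_pos _ (h.div_fulcrum_mem_Ioo hu)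
  have : 0 < (1 - δ) * (deriv Ψ (u / δ) / δ) :=
    mul_pos (by linarith [h.fulcrum_lt_one]) (div_pos hd h.fulcrum_pos)
  rw [(h.hasDerivAt_vt hu).deriv]
  linarith

lemma continuousOn_vt (h : IsVTransform δ Ψ Ψinv) : ContinuousOn (vt δ Ψ Ψinv) (Icc 0 δ) := by
  refine ContinuousOn.congr ?_ fun u hu => vt_of_le hu.2
  exact continuousOn_const.sub continuousOn_id |>.sub <| continuousOn_const.mul <|
    h.continuousOn_gen.comp (continuousOn_id.div_const δ) fun u hu => h.div_fulcrum_mem_Icc hu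

lemma strictAntiOn_vt (h : IsVTransform δ Ψ Ψinv) : StrictAntiOn (vt δ Ψ Ψinv) (Icc 0 δ) :=
  strictAntiOn_of_deriv_neg (convex_Icc 0 δ) h.continuousOn_vt fun u hu => by
    rw [interior_Icc] at hu
    linarith [h.deriv_vt_lt hu]

lemma vt_mem_Icc (h : IsVTransform δ Ψ Ψinv) {u : ℝ} (hu : u ∈ Icc (0 : ℝ) 1) :
    vt δ Ψ Ψinv u ∈ Icc (0 : ℝ) 1 := by
  rcases le_or_gt u δ with huδ | huδ
  · have hmem : u ∈ Icc 0 δ := ⟨hu.1, huδ⟩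
    have hanti := h.strictAntiOn_vt.antitoneOn
    refine ⟨?_, ?_⟩
    · simpa [h.vt_fulcrum] using hanti hmem ⟨h.fulcrum_pos.le, le_rfl⟩ huδ
    · simpa [h.vt_zero] using hanti ⟨le_rfl, h.fulcrum_pos.le⟩ hmem hu.1
  · have h1δ : 0 < 1 - δ := by linarith [h.fulcrum_lt_one]
    have hx := h.genInv_mem_Icc (x := (1 - u) / (1 - δ))
      ⟨div_nonneg (by linarith [hu.2]) h1δ.le, (div_le_one h1δ).2 (by linarith)⟩
    rw [vt_of_lt huδ]
    constructor <;> nlinarith [hx.1, hx.2, hu.2, h.fulcrum_pos]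

lemma vtInv_vt (h : IsVTransform δ Ψ Ψinv) {u : ℝ} (hu : u ∈ Icc 0 δ) :
    vtInv (vt δ Ψ Ψinv) (vt δ Ψ Ψinv u) = u := by
  refine IsLeast.csInf_eq ⟨⟨⟨hu.1, hu.2.trans h.fulcrum_lt_one.le⟩, rfl⟩, ?_⟩
  rintro x ⟨hx, hxu⟩
  by_contra! hlt
  exact (h.strictAntiOn_vt ⟨hx.1, hlt.le.trans hu.2⟩ hu hlt).ne' hxu

lemma exists_vt_eq (h : IsVTransform δ Ψ Ψinv) {v : ℝ} (hv : v ∈ Icc (0 : ℝ) 1) :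
    ∃ u ∈ Icc 0 δ, vt δ Ψ Ψinv u = v := by
  have hsurj := intermediate_value_Icc' h.fulcrum_pos.le h.continuousOn_vt
  rw [h.vt_zero, h.vt_fulcrum] at hsurj
  exact hsurj hv

lemma vtInv_mem_Icc (h : IsVTransform δ Ψ Ψinv) {v : ℝ} (hv : v ∈ Icc (0 : ℝ) 1) :
    vtInv (vt δ Ψ Ψinv) v ∈ Icc 0 δ := by
  obtain ⟨u, hu, rfl⟩ := h.exists_vt_eq hv
  rwa [h.vtInv_vt hu]

lemma vt_vtInv (h : IsVTransform δ Ψ Ψinv) {v : ℝ} (hv : v ∈ Icc (0 : ℝ) 1) :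
    vt δ Ψ Ψinv (vtInv (vt δ Ψ Ψinv) v) = v := by
  obtain ⟨u, hu, rfl⟩ := h.exists_vt_eq hv
  rw [h.vtInv_vt hu]

lemma vtInv_zero (h : IsVTransform δ Ψ Ψinv) : vtInv (vt δ Ψ Ψinv) 0 = δ := by
  simpa [h.vt_fulcrum] using h.vtInv_vt ⟨h.fulcrum_pos.le, le_rfl⟩

lemma vtInv_one (h : IsVTransform δ Ψ Ψinv) : vtInv (vt δ Ψ Ψinv) 1 = 0 := by
  simpa [h.vt_zero] using h.vtInv_vt ⟨le_rfl, h.fulcrum_pos.le⟩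

lemma vtInv_mem_Ioo (h : IsVTransform δ Ψ Ψinv) {v : ℝ} (hv : v ∈ Ioo (0 : ℝ) 1) :
    vtInv (vt δ Ψ Ψinv) v ∈ Ioo 0 δ := by
  have hv' : v ∈ Icc (0 : ℝ) 1 := Ioo_subset_Icc_self hv
  obtain ⟨h0, hδ⟩ := h.vtInv_mem_Icc hv'
  refine ⟨h0.lt_of_ne fun h0 => ?_, hδ.lt_of_ne fun hδ => ?_⟩
  · exact hv.2.ne (by rw [← h.vt_vtInv hv', ← h0, h.vt_zero])
  · exact hv.1.ne' (by rw [← h.vt_vtInv hv', hδ, h.vt_fulcrum])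

lemma vtInv_of_notMem (h : IsVTransform δ Ψ Ψinv) {v : ℝ} (hv : v ∉ Icc (0 : ℝ) 1) :
    vtInv (vt δ Ψ Ψinv) v = 0 := by
  have hempty : {u | u ∈ Icc (0 : ℝ) 1 ∧ vt δ Ψ Ψinv u = v} = ∅ :=
    eq_empty_of_forall_notMem fun u ⟨hu, hv'⟩ => hv (hv' ▸ h.vt_mem_Icc hu)
  rw [vtInv, hempty, Real.sInf_empty]

lemma continuousOn_vtInv (h : IsVTransform δ Ψ Ψinv) :
    ContinuousOn (vtInv (vt δ Ψ Ψinv)) (Icc 0 1) :=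
  (IsCompact.continuousOn_image_of_leftInvOn isCompact_Icc
    h.continuousOn_vt fun _ hu => h.vtInv_vt hu).mono
    fun _ hv => h.exists_vt_eq hv

lemma measurable_vtInv (h : IsVTransform δ Ψ Ψinv) : Measurable (vtInv (vt δ Ψ Ψinv)) := by
  classical
  have : (Icc (0 : ℝ) 1).piecewise (vtInv (vt δ Ψ Ψinv)) 0 = vtInv (vt δ Ψ Ψinv) := by
    ext v
    by_cases hv : v ∈ Icc (0 : ℝ) 1 <;> simp [hv, h.vtInv_of_notMem]
  exact this ▸ h.continuousOn_vtInv.measurable_piecewise continuousOn_const measurableSet_Icc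

lemma hasDerivAt_vtInv (h : IsVTransform δ Ψ Ψinv) {v : ℝ} (hv : v ∈ Ioo (0 : ℝ) 1) :
    HasDerivAt (vtInv (vt δ Ψ Ψinv)) (-vtDelta (vt δ Ψ Ψinv) v) v := by
  have hu := h.vtInv_mem_Ioo hv
  have hcont : ContinuousAt (vtInv (vt δ Ψ Ψinv)) v :=
    h.continuousOn_vtInv.continuousAt (Icc_mem_nhds hv.1 hv.2)
  have hne : deriv (vt δ Ψ Ψinv) (vtInv (vt δ Ψ Ψinv) v) ≠ 0 := by
    linarith [h.deriv_vt_lt hu]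
  have hinv : ∀ᶠ x in nhds v, vt δ Ψ Ψinv (vtInv (vt δ Ψ Ψinv) x) = x := by
    filter_upwards [Icc_mem_nhds hv.1 hv.2] with x hx
    exact h.vt_vtInv hx
  refine ((h.hasDerivAt_vt hu).differentiableAt.hasDerivAt.of_local_left_inverse hcont hne
    hinv).congr_deriv ?_
  rw [vtDelta]
  ring

lemma vtDelta_mem_Ioo (h : IsVTransform δ Ψ Ψinv) {v : ℝ} (hv : v ∈ Ioo (0 : ℝ) 1) :
    vtDelta (vt δ Ψ Ψinv) v ∈ Ioo (0 : ℝ) 1 := by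
  have hd := h.deriv_vt_lt (h.vtInv_mem_Ioo hv)
  rw [vtDelta]
  exact ⟨div_pos_of_neg_of_neg (by norm_num) (by linarith),
    (div_lt_one_of_neg (by linarith)).2 (by linarith)⟩

lemma measurable_vtDelta (h : IsVTransform δ Ψ Ψinv) : Measurable (vtDelta (vt δ Ψ Ψinv)) :=
  measurable_const.div ((measurable_deriv _).comp h.measurable_vtInv)

lemma strictAntiOn_vtInv (h : IsVTransform δ Ψ Ψinv) :
    StrictAntiOn (vtInv (vt δ Ψ Ψinv)) (Icc 0 1) :=
  strictAntiOn_of_deriv_neg (convex_Icc 0 1) h.continuousOn_vtInv fun v hv => by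
    rw [interior_Icc] at hv
    rw [(h.hasDerivAt_vtInv hv).deriv, neg_lt_zero]
    exact (h.vtDelta_mem_Ioo hv).1

lemma image_vtInv_Ioo (h : IsVTransform δ Ψ Ψinv) :
    vtInv (vt δ Ψ Ψinv) '' Ioo 0 1 = Ioo 0 δ := by
  rw [h.continuousOn_vtInv.image_Ioo_of_strictAntiOn zero_le_one h.strictAntiOn_vtInv,
    h.vtInv_one, h.vtInv_zero]

lemma hasDerivAt_vtInvRight (h : IsVTransform δ Ψ Ψinv) {v : ℝ} (hv : v ∈ Ioo (0 : ℝ) 1) :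
    HasDerivAt (vtInvRight (vt δ Ψ Ψinv)) (1 - vtDelta (vt δ Ψ Ψinv) v) v :=
  ((hasDerivAt_id' v).add (h.hasDerivAt_vtInv hv)).congr_deriv (by ring)

lemma continuousOn_vtInvRight (h : IsVTransform δ Ψ Ψinv) :
    ContinuousOn (vtInvRight (vt δ Ψ Ψinv)) (Icc 0 1) :=
  continuousOn_id.add h.continuousOn_vtInv

lemma strictMonoOn_vtInvRight (h : IsVTransform δ Ψ Ψinv) :
    StrictMonoOn (vtInvRight (vt δ Ψ Ψinv)) (Icc 0 1) :=
  strictMonoOn_of_deriv_pos (convex_Icc 0 1) h.continuousOn_vtInvRight fun v hv => by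
    rw [interior_Icc] at hv
    rw [(h.hasDerivAt_vtInvRight hv).deriv, sub_pos]
    exact (h.vtDelta_mem_Ioo hv).2

lemma vtInvRight_zero (h : IsVTransform δ Ψ Ψinv) : vtInvRight (vt δ Ψ Ψinv) 0 = δ := by
  rw [vtInvRight, h.vtInv_zero, zero_add]

lemma vtInvRight_one (h : IsVTransform δ Ψ Ψinv) : vtInvRight (vt δ Ψ Ψinv) 1 = 1 := by
  rw [vtInvRight, h.vtInv_one, add_zero]

lemma image_vtInvRight_Ioo (h : IsVTransform δ Ψ Ψinv) :
    vtInvRight (vt δ Ψ Ψinv) '' Ioo 0 1 = Ioo δ 1 := by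
  rw [h.continuousOn_vtInvRight.image_Ioo_of_strictMonoOn zero_le_one
    h.strictMonoOn_vtInvRight, h.vtInvRight_zero, h.vtInvRight_one]

lemma vt_vtInvRight (h : IsVTransform δ Ψ Ψinv) {v : ℝ} (hv : v ∈ Icc (0 : ℝ) 1) :
    vt δ Ψ Ψinv (vtInvRight (vt δ Ψ Ψinv) v) = v := by
  rcases hv.1.eq_or_lt with rfl | hv0
  · rw [h.vtInvRight_zero, h.vt_fulcrum]
  have hδ : δ < vtInvRight (vt δ Ψ Ψinv) v := by
    simpa [h.vtInvRight_zero] using h.strictMonoOn_vtInvRight ⟨le_rfl, zero_le_one⟩ hv hv0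
  set u := vtInv (vt δ Ψ Ψinv) v
  have hu := h.vtInv_mem_Icc hv
  have hvu : v = 1 - u - (1 - δ) * Ψ (u / δ) := by
    rw [← vt_of_le hu.2]
    exact (h.vt_vtInv hv).symm
  have harg : (1 - vtInvRight (vt δ Ψ Ψinv) v) / (1 - δ) = Ψ (u / δ) := by
    rw [div_eq_iff (by linarith [h.fulcrum_lt_one]), vtInvRight]
    linarith
  rw [vt_of_lt hδ, harg, h.genInv_gen _ (h.div_fulcrum_mem_Icc hu),
    mul_div_cancel₀ _ h.fulcrum_pos.ne', vtInvRight]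
  ring

lemma measurable_uncurry_vtSInv (h : IsVTransform δ Ψ Ψinv) :
    Measurable (Function.uncurry (vtSInv (vt δ Ψ Ψinv))) :=
  Measurable.ite (measurableSet_le measurable_snd (h.measurable_vtDelta.comp measurable_fst))
    (h.measurable_vtInv.comp measurable_fst)
    (measurable_fst.add (h.measurable_vtInv.comp measurable_fst))

lemma map_uncurry_vtSInv_uniform (h : IsVTransform δ Ψ Ψinv) :
    ((volume.restrict (Icc (0 : ℝ) 1)).prod (volume.restrict (Icc (0 : ℝ) 1))).map
      (Function.uncurry (vtSInv (vt δ Ψ Ψinv))) = volume.restrict (Icc (0 : ℝ) 1) := by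
  ext A hA
  set g := vtInv (vt δ Ψ Ψinv)
  set H := vtInvRight (vt δ Ψ Ψinv)
  set Δ := vtDelta (vt δ Ψ Ψinv)
  rw [Measure.map_apply h.measurable_uncurry_vtSInv hA,
    Measure.prod_apply (h.measurable_uncurry_vtSInv hA)]
  calc ∫⁻ v in Icc 0 1, volume.restrict (Icc 0 1) {w | vtSInv (vt δ Ψ Ψinv) v w ∈ A}
      = ∫⁻ v in Ioo 0 1, volume.restrict (Icc 0 1) {w | vtSInv (vt δ Ψ Ψinv) v w ∈ A} :=
        setLIntegral_congr Ioo_ae_eq_Icc.symm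
    _ = ∫⁻ v in Ioo 0 1, (ENNReal.ofReal |-Δ v| * A.indicator 1 (g v)
          + ENNReal.ofReal |1 - Δ v| * A.indicator 1 (H v)) := by
        refine setLIntegral_congr_fun measurableSet_Ioo fun v hv => ?_
        have hΔ := h.vtDelta_mem_Ioo hv
        rw [abs_neg, abs_of_pos hΔ.1, abs_of_pos (sub_pos.2 hΔ.2)]
        exact uniform_setOf_ite_mem (Ioo_subset_Icc_self hΔ) _ _ A
    _ = (∫⁻ x in g '' Ioo 0 1, A.indicator 1 x) + ∫⁻ x in H '' Ioo 0 1, A.indicator 1 x := by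
        rw [lintegral_add_left, lintegral_image_eq_lintegral_abs_deriv_mul measurableSet_Ioo
          (fun v hv => (h.hasDerivAt_vtInv hv).hasDerivWithinAt)
          (h.strictAntiOn_vtInv.injOn.mono Ioo_subset_Icc_self),
          lintegral_image_eq_lintegral_abs_deriv_mul measurableSet_Ioo
          (fun v hv => (h.hasDerivAt_vtInvRight hv).hasDerivWithinAt)
          (h.strictMonoOn_vtInvRight.injOn.mono Ioo_subset_Icc_self)]
        exact h.measurable_vtDelta.neg.abs.ennreal_ofReal.mul
          ((measurable_const.indicator hA).comp h.measurable_vtInv)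
    _ = volume.restrict (Icc (0 : ℝ) 1) A := by
        rw [h.image_vtInv_Ioo, h.image_vtInvRight_Ioo, lintegral_indicator_one hA,
          lintegral_indicator_one hA, ← Measure.add_apply,
          restrict_Ioo_add_restrict_Ioo h.fulcrum_pos.le h.fulcrum_lt_one]

end IsVTransform

theorem stmt_9_general {Ω : Type*} [MeasurableSpace Ω] (P : Measure Ω) [IsProbabilityMeasure P]
    (δ : ℝ) (hδ : δ ∈ Set.Ioo (0:ℝ) 1) (Ψ Ψinv : ℝ → ℝ)
    (hΨc : ContinuousOn Ψ (Set.Icc 0 1))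
    (hΨ0 : Ψ 0 = 0) (hΨ1 : Ψ 1 = 1)
    (hΨinv : ∀ x ∈ Set.Icc (0:ℝ) 1, Ψinv (Ψ x) = x ∧ Ψ (Ψinv x) = x)
    (hΨd : ∀ x ∈ Set.Ioo (0:ℝ) 1, DifferentiableAt ℝ Ψ x ∧ 0 < deriv Ψ x)
    (V W : Ω → ℝ) (hVm : Measurable V) (hWm : Measurable W)
    (hVu : Measure.map V P = volume.restrict (Set.Icc (0:ℝ) 1))
    (hWu : Measure.map W P = volume.restrict (Set.Icc (0:ℝ) 1))
    (hind : ProbabilityTheory.IndepFun V W P)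
    (U : Ω → ℝ) (hU : ∀ ω, U ω = vtSInv (vt δ Ψ Ψinv) (V ω) (W ω)) :
    (∀ᵐ ω ∂P, vt δ Ψ Ψinv (U ω) = V ω) ∧
    Measure.map U P = volume.restrict (Set.Icc (0:ℝ) 1) := by
  have h : IsVTransform δ Ψ Ψinv := ⟨hδ.1, hδ.2, hΨc, hΨ0, hΨ1, fun x hx => (hΨinv x hx).1,
    fun x hx => (hΨd x hx).1, fun x hx => (hΨd x hx).2⟩
  constructor
  · have hV : ∀ᵐ ω ∂P, V ω ∈ Icc (0 : ℝ) 1 :=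
      ae_of_ae_map hVm.aemeasurable (hVu ▸ ae_restrict_mem measurableSet_Icc)
    filter_upwards [hV] with ω hω
    rw [hU, vtSInv]
    split_ifs
    exacts [h.vt_vtInv hω, h.vt_vtInvRight hω]
  · rw [show U = Function.uncurry (vtSInv (vt δ Ψ Ψinv)) ∘ fun ω => (V ω, W ω) from funext hU,
      ← Measure.map_map h.measurable_uncurry_vtSInv (hVm.prodMk hWm),
      (ProbabilityTheory.indepFun_iff_map_prod_eq_prod_map_map hVm.aemeasurable
        hWm.aemeasurable).1 hind, hVu, hWu, h.map_uncurry_vtSInv_uniform]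

theorem stmt_9 {Ω : Type*} [MeasurableSpace Ω] (P : Measure Ω) [IsProbabilityMeasure P]
    (δ : ℝ) (hδ : δ ∈ Set.Ioo (0:ℝ) 1) (Ψ Ψinv : ℝ → ℝ)
    (hΨc : ContinuousOn Ψ (Set.Icc 0 1)) (hΨm : StrictMonoOn Ψ (Set.Icc 0 1))
    (hΨ0 : Ψ 0 = 0) (hΨ1 : Ψ 1 = 1)
    (hΨinv : ∀ x ∈ Set.Icc (0:ℝ) 1, Ψinv (Ψ x) = x ∧ Ψ (Ψinv x) = x)
    (hΨd : ∀ x ∈ Set.Ioo (0:ℝ) 1, DifferentiableAt ℝ Ψ x ∧ 0 < deriv Ψ x)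
    (V W : Ω → ℝ) (hVm : Measurable V) (hWm : Measurable W)
    (hVu : Measure.map V P = volume.restrict (Set.Icc (0:ℝ) 1))
    (hWu : Measure.map W P = volume.restrict (Set.Icc (0:ℝ) 1))
    (hind : ProbabilityTheory.IndepFun V W P)
    (U : Ω → ℝ) (hU : ∀ ω, U ω = vtSInv (vt δ Ψ Ψinv) (V ω) (W ω)) :
    (∀ᵐ ω ∂P, vt δ Ψ Ψinv (U ω) = V ω) ∧
    Measure.map U P = volume.restrict (Set.Icc (0:ℝ) 1) :=
  stmt_9_general P δ hδ Ψ Ψinv hΨc hΨ0 hΨ1 hΨinv hΨd V W hVm hWm hVu hWu hind U hU
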